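/- On the open book, suppose m_k = ∫ z⁰ (Q∘f_k⁻¹)(dz) < 0 for every k = 1,…,K. Then the Fréchet mean of Q exists, is unique, and lies on the spine: μ = (0, μ_{1D}) where μ_{1D} = ∫ z_{1D} Q̃(dz). -/

import Mathlib

/-!
Folding every point of the book onto the leaf `k` of `p` turns the squared open-book distance into a
Euclidean one, `d(p, z)² = (p⁰ - f⁰_k z)² + ‖p_{1D} - z_{1D}‖²`, so the bias–variance decomposition
splits the Fréchet function into `G_k(p⁰) = (p⁰)² - 2 p⁰ m_k`, the spine part `‖p_{1D} - μ_{1D}‖²`,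
and a constant. When `m_k < 0`, `G_k` is nonnegative on `[0, ∞)` and vanishes only at `0`, so the
minimizers are exactly the points with `p⁰ = 0` and `p_{1D} = μ_{1D}`.
-/

open MeasureTheory

/-- The open-book distance on `K` copies of the half-space `H = [0,∞) × ℝ^D`. -/
noncomputable def obDist {K D : ℕ} (p q : Fin K × ℝ × EuclideanSpace ℝ (Fin D)) : ℝ :=
  Real.sqrt ((if p.1 = q.1 then (p.2.1 - q.2.1) ^ 2 else (p.2.1 + q.2.1) ^ 2)
    + ‖p.2.2 - q.2.2‖ ^ 2)

section BiasVariance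

variable {Ω E : Type*} [MeasurableSpace Ω] [NormedAddCommGroup E] {μ : Measure Ω} {Y : Ω → E}

theorem integrable_norm_const_sub_sq [IsFiniteMeasure μ] (hY : Integrable Y μ)
    (hY2 : Integrable (fun ω => ‖Y ω‖ ^ 2) μ) (v : E) :
    Integrable (fun ω => ‖v - Y ω‖ ^ 2) μ := by
  have hYL2 : MemLp Y 2 μ := (memLp_two_iff_integrable_sq_norm hY.1).2 hY2
  exact (memLp_two_iff_integrable_sq_norm (aestronglyMeasurable_const.sub hY.1)).1
    ((memLp_const v).sub hYL2)

theorem integral_norm_const_sub_sq [InnerProductSpace ℝ E] [CompleteSpace E]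
    [IsProbabilityMeasure μ] (hY : Integrable Y μ) (hY2 : Integrable (fun ω => ‖Y ω‖ ^ 2) μ)
    (v : E) :
    ∫ ω, ‖v - Y ω‖ ^ 2 ∂μ = ‖v - ∫ ω, Y ω ∂μ‖ ^ 2 + (∫ ω, ‖Y ω‖ ^ 2 ∂μ - ‖∫ ω, Y ω ∂μ‖ ^ 2) := by
  have hinner : Integrable (fun ω => 2 * inner ℝ v (Y ω)) μ := (hY.const_inner v).const_mul 2
  have hlin : Integrable (fun ω => ‖v‖ ^ 2 - 2 * inner ℝ v (Y ω)) μ :=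
    (integrable_const _).sub hinner
  simp_rw [norm_sub_sq_real v]
  rw [integral_add hlin hY2, integral_sub (integrable_const _) hinner, integral_const_mul,
    integral_inner hY]
  simp only [integral_const, probReal_univ, one_smul]
  ring

theorem integrable_const_sub_sq [IsFiniteMeasure μ] {X : Ω → ℝ} (hX : Integrable X μ)
    (hX2 : Integrable (fun ω => X ω ^ 2) μ) (a : ℝ) :
    Integrable (fun ω => (a - X ω) ^ 2) μ := by
  simpa only [Real.norm_eq_abs, sq_abs] using
    integrable_norm_const_sub_sq hX (by simpa only [Real.norm_eq_abs, sq_abs] using hX2) a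

theorem integral_const_sub_sq [IsProbabilityMeasure μ] {X : Ω → ℝ} (hX : Integrable X μ)
    (hX2 : Integrable (fun ω => X ω ^ 2) μ) (a : ℝ) :
    ∫ ω, (a - X ω) ^ 2 ∂μ = (a - ∫ ω, X ω ∂μ) ^ 2 + (∫ ω, X ω ^ 2 ∂μ - (∫ ω, X ω ∂μ) ^ 2) := by
  simpa only [Real.norm_eq_abs, sq_abs] using
    integral_norm_const_sub_sq hX (by simpa only [Real.norm_eq_abs, sq_abs] using hX2) a

end BiasVariance

section OpenBook

variable {K D : ℕ}

/-- The zeroth coordinate of the folding map `f_k`. -/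
def foldCoord (k : Fin K) (z : Fin K × ℝ × EuclideanSpace ℝ (Fin D)) : ℝ :=
  if z.1 = k then z.2.1 else -z.2.1

theorem foldCoord_sq (k : Fin K) (z : Fin K × ℝ × EuclideanSpace ℝ (Fin D)) :
    foldCoord k z ^ 2 = z.2.1 ^ 2 := by
  unfold foldCoord
  split_ifs <;> ring

theorem obDist_sq (p z : Fin K × ℝ × EuclideanSpace ℝ (Fin D)) :
    obDist p z ^ 2 = (p.2.1 - foldCoord p.1 z) ^ 2 + ‖p.2.2 - z.2.2‖ ^ 2 := by
  rw [obDist, Real.sq_sqrt (by split_ifs <;> positivity), foldCoord]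
  by_cases h : p.1 = z.1
  · simp only [if_pos h, if_pos h.symm]
  · simp only [if_neg h, if_neg (Ne.symm h)]
    ring

theorem integrable_foldCoord {Q : Measure (Fin K × ℝ × EuclideanSpace ℝ (Fin D))}
    (h0 : Integrable (fun z => z.2.1) Q) (k : Fin K) : Integrable (foldCoord k) Q := by
  have hmeas : Measurable (foldCoord (D := D) k) :=
    Measurable.ite (measurable_fst (measurableSet_singleton k)) measurable_snd.fst
      measurable_snd.fst.neg
  refine h0.mono hmeas.aestronglyMeasurable (Filter.Eventually.of_forall fun z => ?_)
  unfold foldCoord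
  split_ifs <;> simp

theorem integral_obDist_sq (Q : Measure (Fin K × ℝ × EuclideanSpace ℝ (Fin D)))
    [IsProbabilityMeasure Q] (h0sq : Integrable (fun z => z.2.1 ^ 2) Q)
    (h0 : Integrable (fun z => z.2.1) Q) (h1sq : Integrable (fun z => ‖z.2.2‖ ^ 2) Q)
    (h1 : Integrable (fun z => z.2.2) Q) (p : Fin K × ℝ × EuclideanSpace ℝ (Fin D)) :
    ∫ z, obDist p z ^ 2 ∂Q
      = (p.2.1 ^ 2 - 2 * p.2.1 * ∫ z, foldCoord p.1 z ∂Q) + ‖p.2.2 - ∫ z, z.2.2 ∂Q‖ ^ 2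
        + (∫ z, z.2.1 ^ 2 ∂Q + ∫ z, ‖z.2.2‖ ^ 2 ∂Q - ‖∫ z, z.2.2 ∂Q‖ ^ 2) := by
  have hfold := integrable_foldCoord h0 p.1
  have hfold2 : Integrable (fun z => foldCoord p.1 z ^ 2) Q := by
    simpa only [foldCoord_sq] using h0sq
  simp_rw [obDist_sq]
  rw [integral_add (integrable_const_sub_sq hfold hfold2 _)
      (integrable_norm_const_sub_sq h1 h1sq _),
    integral_const_sub_sq hfold hfold2, integral_norm_const_sub_sq h1 h1sq]
  simp only [foldCoord_sq]
  ring

end OpenBook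

theorem sq_sub_two_mul_nonneg {x m : ℝ} (hx : 0 ≤ x) (hm : m < 0) : 0 ≤ x ^ 2 - 2 * x * m := by
  nlinarith

theorem sq_sub_two_mul_eq_zero_iff {x m : ℝ} (hx : 0 ≤ x) (hm : m < 0) :
    x ^ 2 - 2 * x * m = 0 ↔ x = 0 := by
  constructor
  · intro h
    have : x * (x - 2 * m) = 0 := by linarith
    rcases mul_eq_zero.1 this with hx0 | hx0
    · exact hx0
    · linarith
  · rintro rfl
    ring

theorem stmt7_general {K D : ℕ}
    (Q : Measure (Fin K × ℝ × EuclideanSpace ℝ (Fin D))) [IsProbabilityMeasure Q]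
    (h0sq : Integrable (fun z => z.2.1 ^ 2) Q)
    (h0 : Integrable (fun z => z.2.1) Q)
    (h1sq : Integrable (fun z => ‖z.2.2‖ ^ 2) Q)
    (h1 : Integrable (fun z => z.2.2) Q)
    (m : Fin K → ℝ)
    (hm : ∀ k, m k = ∫ z, (if z.1 = k then z.2.1 else -z.2.1) ∂Q)
    (hneg : ∀ k, m k < 0)
    (μ1D : EuclideanSpace ℝ (Fin D)) (hμ : μ1D = ∫ z, z.2.2 ∂Q) :
    ∀ p : Fin K × ℝ × EuclideanSpace ℝ (Fin D), 0 ≤ p.2.1 →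
      ((∀ q : Fin K × ℝ × EuclideanSpace ℝ (Fin D), 0 ≤ q.2.1 →
          ∫ z, obDist p z ^ 2 ∂Q ≤ ∫ z, obDist q z ^ 2 ∂Q)
        ↔ (p.2.1 = 0 ∧ p.2.2 = μ1D)) := by
  have hF q := integral_obDist_sq Q h0sq h0 h1sq h1 q
  simp only [foldCoord, ← hm, ← hμ] at hF
  have hG_nonneg (q : Fin K × ℝ × EuclideanSpace ℝ (Fin D)) (hq : 0 ≤ q.2.1) :=
    sq_sub_two_mul_nonneg hq (hneg q.1)
  intro p hp
  simp only [hF, add_le_add_iff_right]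
  constructor
  · intro hmin
    have hspine := hmin (p.1, 0, μ1D) le_rfl
    simp only [sub_self, norm_zero] at hspine
    have hspine_nonneg : 0 ≤ ‖p.2.2 - μ1D‖ ^ 2 := by positivity
    refine ⟨(sq_sub_two_mul_eq_zero_iff hp (hneg p.1)).1 (by linarith [hG_nonneg p hp]), ?_⟩
    have : ‖p.2.2 - μ1D‖ ^ 2 = 0 := by linarith [hG_nonneg p hp]
    simpa [sub_eq_zero] using this
  · rintro ⟨hp0, hp1⟩ q hq
    rw [hp0, hp1, sub_self, norm_zero]
    linarith [hG_nonneg q hq, sq_nonneg ‖q.2.2 - μ1D‖]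

/-- On the open book, if the folded first-coordinate means satisfy `m_k < 0`
for every leaf `k`, then the Fréchet mean of `Q` exists, is unique, and is the spine point
`(0, μ_{1D})`: a point of the open book is a minimizer of the Fréchet function iff its zeroth
coordinate is `0` and its last `D` coordinates equal `μ_{1D} = ∫ z_{1D} dQ̃`. -/
theorem stmt7 {K D : ℕ}
    (Q : Measure (Fin K × ℝ × EuclideanSpace ℝ (Fin D))) [IsProbabilityMeasure Q]
    (hae : ∀ᵐ z ∂Q, 0 ≤ z.2.1)
    (h0sq : Integrable (fun z => z.2.1 ^ 2) Q)
    (h0 : Integrable (fun z => z.2.1) Q)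
    (h1sq : Integrable (fun z => ‖z.2.2‖ ^ 2) Q)
    (h1 : Integrable (fun z => z.2.2) Q)
    (m : Fin K → ℝ)
    (hm : ∀ k, m k = ∫ z, (if z.1 = k then z.2.1 else -z.2.1) ∂Q)
    (hneg : ∀ k, m k < 0)
    (μ1D : EuclideanSpace ℝ (Fin D)) (hμ : μ1D = ∫ z, z.2.2 ∂Q) :
    ∀ p : Fin K × ℝ × EuclideanSpace ℝ (Fin D), 0 ≤ p.2.1 →
      ((∀ q : Fin K × ℝ × EuclideanSpace ℝ (Fin D), 0 ≤ q.2.1 →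
          ∫ z, obDist p z ^ 2 ∂Q ≤ ∫ z, obDist q z ^ 2 ∂Q)
        ↔ (p.2.1 = 0 ∧ p.2.2 = μ1D)) :=
  stmt7_general Q h0sq h0 h1sq h1 m hm hneg μ1D hμ
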